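/- arXiv:1709.01050 — 5 statements merged into one kernel-verified Lean document; each statement's English description precedes it below -/
import Mathlib

section
/- In a complete chain graph G, for any block B (a connected component of the undirected-edge subgraph), the set of parents pa_G(B) of B is a union of blocks of G; that is, if A ∈ pa_G(B) and W lies in the same block as A with W ≠ A, then W ∈ pa_G(B). -/
/-- A mixed graph with directed and undirected edges, at most one edge between any
two vertices, and no partially directed cycle (a chain graph). -/
structure ChainGraph (V : Type*) where
  /-- directed edge `a → b` -/
  Dir : V → V → Prop
  /-- undirected edge `a − b` -/
  Undir : V → V → Prop
  undir_symm : ∀ a b, Undir a b → Undir b a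
  undir_irrefl : ∀ a, ¬ Undir a a
  dir_irrefl : ∀ a, ¬ Dir a a
  not_dir_and_undir : ∀ a b, Dir a b → ¬ Undir a b
  not_dir_both : ∀ a b, Dir a b → ¬ Dir b a
  /-- no partially directed cycle: there is no partially directed path from `a` to `b`
  together with a directed edge `b → a`. -/
  no_partially_directed_cycle :
    ∀ a b, Relation.ReflTransGen (fun x y => Dir x y ∨ Undir x y) a b → ¬ Dir b a

namespace ChainGraph

variable {V : Type*} (G : ChainGraph V)

/-- Every pair of distinct vertices is adjacent. -/
def Complete : Prop := ∀ a b : V, a ≠ b → G.Dir a b ∨ G.Dir b a ∨ G.Undir a b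

/-- `a` and `b` are connected by a path of undirected edges (or equal). -/
def SameBlock (a b : V) : Prop := Relation.ReflTransGen G.Undir a b

/-- A block: a connected component of the undirected-edge subgraph. -/
def IsBlock (B : Set V) : Prop := ∃ v, B = {w | G.SameBlock v w}

/-- The parents of the vertex set `B` lying outside of `B`. -/
def parentsOf (B : Set V) : Set V := {w | w ∉ B ∧ ∃ v ∈ B, G.Dir w v}

/-- A set of vertices is valid (a union of blocks) if it is closed under `SameBlock`. -/
def Valid (A : Set V) : Prop := ∀ a ∈ A, ∀ w, G.SameBlock a w → w ∈ A

/-- `a` is in the anterior of `b`: there is a partially directed path from `a` to `b`,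
or `a = b`. -/
def Anterior (a b : V) : Prop :=
  Relation.ReflTransGen (fun x y => G.Dir x y ∨ G.Undir x y) a b

end ChainGraph

/-! If `w` shares a block with a parent `a → v` of `v ∈ B`, then `w` is anterior to `v` and lies
outside `B`. Completeness gives an edge between `w` and `v`: an undirected one would put `w`
into `B`, and `v → w` would close a partially directed cycle, so `w → v`. -/

namespace ChainGraph

variable {V : Type*} {G : ChainGraph V}

instance : Std.Symm G.Undir := ⟨G.undir_symm⟩

theorem SameBlock.symm {a b : V} (h : G.SameBlock a b) : G.SameBlock b a :=
  Std.Symm.symm (r := Relation.ReflTransGen G.Undir) a b h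

theorem SameBlock.anterior {a b : V} (h : G.SameBlock a b) : G.Anterior a b :=
  Relation.ReflTransGen.mono (fun _ _ ↦ Or.inr) a b h

theorem Anterior.not_dir {a b : V} (h : G.Anterior a b) : ¬ G.Dir b a :=
  G.no_partially_directed_cycle a b h

theorem IsBlock.valid {B : Set V} (hB : G.IsBlock B) : G.Valid B := by
  obtain ⟨v, rfl⟩ := hB
  exact fun _ ha _ hw ↦ Relation.ReflTransGen.trans ha hw

theorem Valid.compl {A : Set V} (hA : G.Valid A) : G.Valid Aᶜ :=
  fun _ ha _ hw hwA ↦ ha (hA _ hwA _ hw.symm)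

theorem Complete.dir_of_anterior_of_not_sameBlock {a b : V} (hc : G.Complete)
    (hab : G.Anterior a b) (hblock : ¬ G.SameBlock a b) : G.Dir a b := by
  have hne : a ≠ b := by rintro rfl; exact hblock .refl
  rcases hc a b hne with hdir | hdir | hundir
  · exact hdir
  · exact absurd hdir hab.not_dir
  · exact absurd (.single hundir) hblock

end ChainGraph

theorem parents_of_block_union_of_blocks_general {V : Type*} (G : ChainGraph V)
    (hc : G.Complete) (B : Set V) (hB : G.IsBlock B)
    (a : V) (ha : a ∈ G.parentsOf B) (w : V) (hw : G.SameBlock a w) :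
    w ∈ G.parentsOf B := by
  obtain ⟨haB, v, hvB, hav⟩ := ha
  have hwB : w ∉ B := hB.valid.compl a haB w hw
  have hwv_ant : G.Anterior w v := hw.symm.anterior.tail (Or.inl hav)
  have hwv_block : ¬ G.SameBlock w v := fun h ↦ hwB (hB.valid v hvB w h.symm)
  exact ⟨hwB, v, hvB, hc.dir_of_anterior_of_not_sameBlock hwv_ant hwv_block⟩

/-- In a complete chain graph, for any block `B`, the set of parents of `B`
is a union of blocks: if `a ∈ pa_G(B)` and `w` lies in the same block as `a` with
`w ≠ a`, then `w ∈ pa_G(B)`. -/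
theorem parents_of_block_union_of_blocks {V : Type*} (G : ChainGraph V)
    (hc : G.Complete) (B : Set V) (hB : G.IsBlock B)
    (a : V) (ha : a ∈ G.parentsOf B) (w : V) (hw : G.SameBlock a w) (hwa : w ≠ a) :
    w ∈ G.parentsOf B :=
  parents_of_block_union_of_blocks_general G hc B hB a ha w hw
end

section
/- Suppose the counterfactual variables {Y(a,m) : a ∈ {0,1}, m} ∪ {M(a') : a' ∈ {0,1}} ∪ {A} are mutually independent, Y and M satisfy consistency (Y = Y(A, M(A)) and M = M(A)), M is discrete with finitely many values, and P(A = a, M = m) > 0 for all a, m. Then E[Y(1, M(0))] − E[Y(0)] = Σ_m (E[Y | A=1, M=m] − E[Y | A=0, M=m]) · P(M = m | A = 0). -/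
/-! Conditioning on the event `{A = a, M = m} = {(A, M(a)) = (a, m)}`, which is
independent of `Y(a, m)`, leaves `E[Y(a, m)]` unchanged, so `E[Y | A = a, M = m] = E[Y(a, m)]`;
likewise `P(M = m | A = 0) = P(M(0) = m)`. Splitting `Ω` along the fibres of `M(0)`, which is
independent of each `Y(a, m)`, gives `E[Y(a, M(0))] = Σ_m E[Y(a, m)] P(M(0) = m)`. -/

open MeasureTheory ProbabilityTheory

/-- Index type for the family of counterfactuals `{Y(a,m)} ∪ {M(a')} ∪ {A}`. -/
def MedIndex (𝓜 : Type) : Type := (Bool × 𝓜) ⊕ Bool ⊕ Unit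

/-- Codomain of each member of the counterfactual family. -/
def MedCodomain (𝓜 : Type) : MedIndex 𝓜 → Type
  | Sum.inl _ => ℝ
  | Sum.inr (Sum.inl _) => 𝓜
  | Sum.inr (Sum.inr _) => Bool

/-- The family of counterfactual random variables. -/
def medFamily {Ω : Type*} {𝓜 : Type} (Y : Bool → 𝓜 → Ω → ℝ) (M : Bool → Ω → 𝓜) (A : Ω → Bool) :
    ∀ i : MedIndex 𝓜, Ω → MedCodomain 𝓜 i
  | Sum.inl am => Y am.1 am.2
  | Sum.inr (Sum.inl a) => M a
  | Sum.inr (Sum.inr _) => A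

/-- The measurable-space structure on each codomain. -/
def medMS (𝓜 : Type) [m𝓜 : MeasurableSpace 𝓜] :
    ∀ i : MedIndex 𝓜, MeasurableSpace (MedCodomain 𝓜 i)
  | Sum.inl _ => inferInstanceAs (MeasurableSpace ℝ)
  | Sum.inr (Sum.inl _) => m𝓜
  | Sum.inr (Sum.inr _) => inferInstanceAs (MeasurableSpace Bool)

namespace ProbabilityTheory

variable {Ω β : Type*} [MeasurableSpace Ω] [MeasurableSpace β] {μ : Measure Ω}

theorem integral_cond_eq_inv_mul_setIntegral (f : Ω → ℝ) (s : Set Ω) :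
    ∫ ω, f ω ∂μ[|s] = (μ.real s)⁻¹ * ∫ ω in s, f ω ∂μ := by
  rw [cond, integral_smul_measure, ENNReal.toReal_inv, smul_eq_mul, measureReal_def]

theorem IndepFun.setIntegral_preimage_eq_mul {Z : Ω → β} {X : Ω → ℝ} (h : IndepFun Z X μ)
    (hZ : Measurable Z) (hX : AEMeasurable X μ) {T : Set β} (hT : MeasurableSet T) :
    ∫ ω in Z ⁻¹' T, X ω ∂μ = μ.real (Z ⁻¹' T) * ∫ ω, X ω ∂μ :=
  ((IndepFun_iff_Indep Z X μ).1 h).setIntegral_eq_mul (f := id) hZ.comap_le hX ⟨T, hT, rfl⟩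
    aestronglyMeasurable_id

theorem IndepFun.integral_cond_preimage [IsFiniteMeasure μ] {Z : Ω → β} {X : Ω → ℝ}
    (h : IndepFun Z X μ) (hZ : Measurable Z) (hX : AEMeasurable X μ) {T : Set β}
    (hT : MeasurableSet T) (hμT : μ (Z ⁻¹' T) ≠ 0) :
    ∫ ω, X ω ∂μ[|Z ⁻¹' T] = ∫ ω, X ω ∂μ := by
  rw [integral_cond_eq_inv_mul_setIntegral, h.setIntegral_preimage_eq_mul hZ hX hT, ← mul_assoc,
    inv_mul_cancel₀ ((measureReal_ne_zero_iff).2 hμT), one_mul]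

theorem IndepFun.cond_preimage_apply [IsFiniteMeasure μ] {γ : Type*} [MeasurableSpace γ]
    {Z : Ω → β} {W : Ω → γ} (h : IndepFun Z W μ) (hZ : Measurable Z) {S : Set β} {T : Set γ}
    (hS : MeasurableSet S) (hT : MeasurableSet T) (hμS : μ (Z ⁻¹' S) ≠ 0) :
    μ[|Z ⁻¹' S] (W ⁻¹' T) = μ (W ⁻¹' T) := by
  rw [cond_apply (hZ hS), h.measure_inter_preimage_eq_mul _ _ hS hT, ← mul_assoc,
    ENNReal.inv_mul_cancel hμS (measure_ne_top _ _), one_mul]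

variable {𝓜 : Type*} [Fintype 𝓜] [MeasurableSpace 𝓜] [MeasurableSingletonClass 𝓜]

theorem integral_eq_sum_setIntegral_fiber {N : Ω → 𝓜} (hN : Measurable N) {X : 𝓜 → Ω → ℝ}
    (hX : ∀ m, Integrable (X m) μ) :
    ∫ ω, X (N ω) ω ∂μ = ∑ m, ∫ ω in N ⁻¹' {m}, X m ω ∂μ := by
  have hfiber : ∀ m, Set.EqOn (fun ω => X (N ω) ω) (X m) (N ⁻¹' {m}) := by
    intro m ω hω
    simp only [Set.mem_preimage, Set.mem_singleton_iff] at hω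
    simp only [hω]
  have hmeas : ∀ m, MeasurableSet (N ⁻¹' {m}) := fun m => hN (measurableSet_singleton m)
  have hcover : ⋃ m, N ⁻¹' {m} = Set.univ := by
    rw [← Set.preimage_iUnion, Set.iUnion_of_singleton, Set.preimage_univ]
  rw [← setIntegral_univ, ← hcover, integral_iUnion_fintype hmeas]
  · exact Finset.sum_congr rfl fun m _ => setIntegral_congr_fun (hmeas m) (hfiber m)
  · exact fun m m' hmm' => Disjoint.preimage N (Set.disjoint_singleton.2 hmm')
  · exact fun m => (hX m).integrableOn.congr_fun (hfiber m).symm (hmeas m)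

theorem integral_eq_sum_of_indepFun {N : Ω → 𝓜} (hN : Measurable N) {X : 𝓜 → Ω → ℝ}
    (hX : ∀ m, Integrable (X m) μ) (hindep : ∀ m, IndepFun N (X m) μ) :
    ∫ ω, X (N ω) ω ∂μ = ∑ m, μ.real (N ⁻¹' {m}) * ∫ ω, X m ω ∂μ := by
  rw [integral_eq_sum_setIntegral_fiber hN hX]
  exact Finset.sum_congr rfl fun m _ =>
    (hindep m).setIntegral_preimage_eq_mul hN (hX m).aemeasurable (measurableSet_singleton m)

end ProbabilityTheory

section Consistency

variable {Ω α 𝓜 : Type*} {M : α → Ω → 𝓜} {A : Ω → α} {Mobs : Ω → 𝓜}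

theorem setOf_treatment_mediator_eq_preimage (hMcons : ∀ ω, Mobs ω = M (A ω) ω) (a : α) (m : 𝓜) :
    {ω | A ω = a ∧ Mobs ω = m} = (fun ω => (A ω, M a ω)) ⁻¹' {(a, m)} := by
  ext ω
  simp only [Set.mem_ofPred_eq, Set.mem_preimage, Set.mem_singleton_iff, Prod.mk.injEq, hMcons]
  constructor <;> rintro ⟨rfl, h⟩ <;> exact ⟨rfl, h⟩

variable [MeasurableSpace Ω] [MeasurableSpace α] [MeasurableSingletonClass α]
  [MeasurableSpace 𝓜] [MeasurableSingletonClass 𝓜] {μ : Measure Ω}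

theorem integral_cond_treatment_mediator [IsFiniteMeasure μ] {Y : α → 𝓜 → Ω → ℝ} {Yobs : Ω → ℝ}
    {a : α} {m : 𝓜} (hmM : Measurable (M a)) (hmA : Measurable A)
    (hMcons : ∀ ω, Mobs ω = M (A ω) ω) (hYcons : ∀ ω, Yobs ω = Y (A ω) (Mobs ω) ω)
    (hY : AEMeasurable (Y a m) μ) (hindep : IndepFun (fun ω => (A ω, M a ω)) (Y a m) μ)
    (hpos : μ {ω | A ω = a ∧ Mobs ω = m} ≠ 0) :
    ∫ ω, Yobs ω ∂μ[|{ω | A ω = a ∧ Mobs ω = m}] = ∫ ω, Y a m ω ∂μ := by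
  have hevent := setOf_treatment_mediator_eq_preimage hMcons a m
  have hmeas : Measurable fun ω => (A ω, M a ω) := hmA.prodMk hmM
  have hYobs : ∀ ω ∈ {ω | A ω = a ∧ Mobs ω = m}, Yobs ω = Y a m ω := by
    rintro ω ⟨hA, hM⟩
    rw [hYcons, hA, hM]
  rw [integral_congr_ae (ae_cond_of_forall_mem (hevent ▸ hmeas (measurableSet_singleton _)) hYobs),
    hevent, hindep.integral_cond_preimage hmeas hY (measurableSet_singleton _) (hevent ▸ hpos)]

theorem cond_treatment_apply_mediator [IsFiniteMeasure μ] (hmA : Measurable A)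
    (hMcons : ∀ ω, Mobs ω = M (A ω) ω) {a : α} (hindep : IndepFun A (M a) μ)
    (hμA : μ (A ⁻¹' {a}) ≠ 0) (m : 𝓜) :
    μ[|{ω | A ω = a}] {ω | Mobs ω = m} = μ (M a ⁻¹' {m}) := by
  have hA : MeasurableSet (A ⁻¹' {a}) := hmA (measurableSet_singleton a)
  have hfiber : A ⁻¹' {a} ∩ {ω | Mobs ω = m} = A ⁻¹' {a} ∩ M a ⁻¹' {m} := by
    ext ω
    simp only [Set.mem_inter_iff, Set.mem_preimage, Set.mem_singleton_iff, Set.mem_ofPred_eq,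
      hMcons]
    constructor <;> rintro ⟨h, h'⟩ <;> simp_all
  rw [show {ω | A ω = a} = A ⁻¹' {a} from rfl, ← cond_inter_self hA, hfiber, cond_inter_self hA,
    hindep.cond_preimage_apply hmA (measurableSet_singleton _) (measurableSet_singleton _) hμA]

end Consistency

theorem mediation_formula_general
    {Ω : Type*} [MeasurableSpace Ω] (μ : Measure Ω) [IsProbabilityMeasure μ]
    {𝓜 : Type} [Fintype 𝓜] [MeasurableSpace 𝓜] [MeasurableSingletonClass 𝓜]
    (Y : Bool → 𝓜 → Ω → ℝ) (M : Bool → Ω → 𝓜) (A : Ω → Bool)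
    (hmM : ∀ a, Measurable (M a)) (hmA : Measurable A)
    (hint : ∀ a m, Integrable (Y a m) μ)
    (hindep : iIndepFun (m := medMS 𝓜) (medFamily Y M A) μ)
    (Mobs : Ω → 𝓜) (Yobs : Ω → ℝ)
    (hMcons : ∀ ω, Mobs ω = M (A ω) ω)
    (hYcons : ∀ ω, Yobs ω = Y (A ω) (Mobs ω) ω)
    (hpos : ∀ (a : Bool) (m : 𝓜), 0 < μ {ω | A ω = a ∧ Mobs ω = m}) :
    (∫ ω, Y true (M false ω) ω ∂μ) - (∫ ω, Y false (M false ω) ω ∂μ) =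
      ∑ m : 𝓜,
        ((∫ ω, Yobs ω ∂(μ[|{ω | A ω = true ∧ Mobs ω = m}])) -
          (∫ ω, Yobs ω ∂(μ[|{ω | A ω = false ∧ Mobs ω = m}]))) *
        (μ[|{ω | A ω = false}] {ω | Mobs ω = m}).toReal := by
  have hfam : ∀ i, @AEMeasurable _ _ (medMS 𝓜 i) _ (medFamily Y M A i) μ := by
    rintro (⟨a, m⟩ | a | ⟨⟩)
    exacts [(hint a m).aemeasurable, (hmM a).aemeasurable, hmA.aemeasurable]
  have hM_Y : ∀ a a' m, IndepFun (M a') (Y a m) μ := fun a a' m =>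
    hindep.indepFun (i := Sum.inr (Sum.inl a')) (j := Sum.inl (a, m)) Sum.inr_ne_inl
  have hAM_Y : ∀ a m, IndepFun (fun ω => (A ω, M a ω)) (Y a m) μ := fun a m =>
    hindep.indepFun_prodMk₀ hfam (Sum.inr (Sum.inr ())) (Sum.inr (Sum.inl a)) (Sum.inl (a, m))
      Sum.inr_ne_inl Sum.inr_ne_inl
  have hA_M : IndepFun A (M false) μ :=
    hindep.indepFun (i := Sum.inr (Sum.inr ())) (j := Sum.inr (Sum.inl false))
      (Sum.inr_injective.ne Sum.inr_ne_inl)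
  have hcondY : ∀ a m, ∫ ω, Yobs ω ∂μ[|{ω | A ω = a ∧ Mobs ω = m}] = ∫ ω, Y a m ω ∂μ :=
    fun a m => integral_cond_treatment_mediator (hmM a) hmA hMcons hYcons (hint a m).aemeasurable
      (hAM_Y a m) (hpos a m).ne'
  have hμA : ∀ m, μ (A ⁻¹' {false}) ≠ 0 := fun m =>
    ((hpos false m).trans_le (measure_mono fun _ h => h.1)).ne'
  rw [integral_eq_sum_of_indepFun (hmM false) (hint true) (hM_Y true false),
    integral_eq_sum_of_indepFun (hmM false) (hint false) (hM_Y false false),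
    ← Finset.sum_sub_distrib]
  refine Finset.sum_congr rfl fun m _ => ?_
  rw [hcondY, hcondY, cond_treatment_apply_mediator hmA hMcons hA_M (hμA m), ← mul_sub, mul_comm,
    measureReal_def]

/-- Pearl's mediation formula.  If the counterfactuals
`{Y(a,m)} ∪ {M(a')} ∪ {A}` are mutually independent, consistency holds, `M` is
finite-valued, and positivity holds, then
`E[Y(1, M(0))] − E[Y(0)] = Σ_m (E[Y | A=1, M=m] − E[Y | A=0, M=m]) P(M=m | A=0)`. -/
theorem mediation_formula
    {Ω : Type*} [MeasurableSpace Ω] (μ : Measure Ω) [IsProbabilityMeasure μ]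
    {𝓜 : Type} [Fintype 𝓜] [MeasurableSpace 𝓜] [MeasurableSingletonClass 𝓜]
    (Y : Bool → 𝓜 → Ω → ℝ) (M : Bool → Ω → 𝓜) (A : Ω → Bool)
    (hmY : ∀ a m, Measurable (Y a m)) (hmM : ∀ a, Measurable (M a)) (hmA : Measurable A)
    (hint : ∀ a m, Integrable (Y a m) μ)
    (hint' : ∀ a a' : Bool, Integrable (fun ω => Y a (M a' ω) ω) μ)
    (hindep : iIndepFun (m := medMS 𝓜) (medFamily Y M A) μ)
    (Mobs : Ω → 𝓜) (Yobs : Ω → ℝ)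
    (hMcons : ∀ ω, Mobs ω = M (A ω) ω)
    (hYcons : ∀ ω, Yobs ω = Y (A ω) (Mobs ω) ω)
    (hpos : ∀ (a : Bool) (m : 𝓜), 0 < μ {ω | A ω = a ∧ Mobs ω = m}) :
    (∫ ω, Y true (M false ω) ω ∂μ) - (∫ ω, Y false (M false ω) ω ∂μ) =
      ∑ m : 𝓜,
        ((∫ ω, Yobs ω ∂(μ[|{ω | A ω = true ∧ Mobs ω = m}])) -
          (∫ ω, Yobs ω ∂(μ[|{ω | A ω = false ∧ Mobs ω = m}]))) *
        (μ[|{ω | A ω = false}] {ω | Mobs ω = m}).toReal :=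
  mediation_formula_general μ Y M A hmM hmA hint hindep Mobs Yobs hMcons hYcons hpos
end

section
/- If a strictly positive joint distribution p(y¹, y², a) over finite sets factorizes as p(y¹, y², a) = φ₁₂(y¹, y²) φ₁(y¹, a) φ₂(y², a) p(a) / Z(a) with Z(a) the partition function, then for every pair of values a₀, a₁ of A and all y¹, ỹ¹, y², ỹ²: the conditional odds-ratio quantity [p(y¹, y² | a) p(ỹ¹, ỹ² | a)] / [p(y¹, ỹ² | a) p(ỹ¹, y² | a)] does not depend on a; i.e., it is the same for a = a₀ and a = a₁. -/
/-- If a strictly positive joint pmf `p(y¹, y², a)` over finite sets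
factorizes as `p(y¹,y²,a) = φ₁₂(y¹,y²) φ₁(y¹,a) φ₂(y²,a) p_A(a) / Z(a)`, then the
conditional odds ratio
`[p(y¹,y²|a) p(ỹ¹,ỹ²|a)] / [p(y¹,ỹ²|a) p(ỹ¹,y²|a)]` does not depend on `a`. -/
theorem chain_graph_odds_ratio_invariant
    {𝓨₁ 𝓨₂ 𝓐 : Type*} [Fintype 𝓨₁] [Fintype 𝓨₂] [Fintype 𝓐]
    (p : 𝓨₁ → 𝓨₂ → 𝓐 → ℝ) (hp : ∀ y₁ y₂ a, 0 < p y₁ y₂ a)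
    (hpmf : ∑ y₁ : 𝓨₁, ∑ y₂ : 𝓨₂, ∑ a : 𝓐, p y₁ y₂ a = 1)
    (φ₁₂ : 𝓨₁ → 𝓨₂ → ℝ) (φ₁ : 𝓨₁ → 𝓐 → ℝ) (φ₂ : 𝓨₂ → 𝓐 → ℝ) (pA : 𝓐 → ℝ) (Z : 𝓐 → ℝ)
    (hφ₁₂ : ∀ y₁ y₂, 0 < φ₁₂ y₁ y₂) (hφ₁ : ∀ y₁ a, 0 < φ₁ y₁ a)
    (hφ₂ : ∀ y₂ a, 0 < φ₂ y₂ a)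
    (hZ : ∀ a, Z a = ∑ y₁ : 𝓨₁, ∑ y₂ : 𝓨₂, φ₁₂ y₁ y₂ * φ₁ y₁ a * φ₂ y₂ a)
    (hfact : ∀ y₁ y₂ a, p y₁ y₂ a = φ₁₂ y₁ y₂ * φ₁ y₁ a * φ₂ y₂ a * pA a / Z a)
    -- the conditional pmf given `A = a`
    (pc : 𝓨₁ → 𝓨₂ → 𝓐 → ℝ)
    (hpc : ∀ y₁ y₂ a, pc y₁ y₂ a = p y₁ y₂ a / ∑ u : 𝓨₁, ∑ v : 𝓨₂, p u v a) :
    ∀ (a₀ a₁ : 𝓐) (y₁ w₁ : 𝓨₁) (y₂ w₂ : 𝓨₂),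
      pc y₁ y₂ a₀ * pc w₁ w₂ a₀ / (pc y₁ w₂ a₀ * pc w₁ y₂ a₀) =
      pc y₁ y₂ a₁ * pc w₁ w₂ a₁ / (pc y₁ w₂ a₁ * pc w₁ y₂ a₁) := by
  intro a₀ a₁ y₁ w₁ y₂ w₂
  suffices h : ∀ a (y₁ w₁ : 𝓨₁) (y₂ w₂ : 𝓨₂),
      pc y₁ y₂ a * pc w₁ w₂ a / (pc y₁ w₂ a * pc w₁ y₂ a) =
      φ₁₂ y₁ y₂ * φ₁₂ w₁ w₂ / (φ₁₂ y₁ w₂ * φ₁₂ w₁ y₂) by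
    rw [h, h]
  intro a y₁ w₁ y₂ w₂
  have hne₁ : Nonempty 𝓨₁ := ⟨y₁⟩
  have hne₂ : Nonempty 𝓨₂ := ⟨y₂⟩
  have hZpos : 0 < Z a := by
    rw [hZ]
    exact Finset.sum_pos (fun u _ => Finset.sum_pos
      (fun v _ => mul_pos (mul_pos (hφ₁₂ u v) (hφ₁ u a)) (hφ₂ v a)) Finset.univ_nonempty) Finset.univ_nonempty
  have hX : 0 < φ₁₂ y₁ y₂ * φ₁ y₁ a * φ₂ y₂ a := mul_pos (mul_pos (hφ₁₂ y₁ y₂) (hφ₁ y₁ a)) (hφ₂ y₂ a)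
  have hpApos : 0 < pA a := by
    have hpp := hp y₁ y₂ a
    rw [hfact] at hpp
    have h' : 0 < φ₁₂ y₁ y₂ * φ₁ y₁ a * φ₂ y₂ a * pA a := by
      have := mul_pos hpp hZpos
      rwa [div_mul_cancel₀ _ (ne_of_gt hZpos)] at this
    rcases mul_pos_iff.mp h' with ⟨_, h⟩ | ⟨h, _⟩
    · exact h
    · linarith
  have hSpos : 0 < ∑ u : 𝓨₁, ∑ v : 𝓨₂, p u v a :=
    Finset.sum_pos (fun u _ => Finset.sum_pos (fun v _ => hp u v a)
      Finset.univ_nonempty) Finset.univ_nonempty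
  rw [hpc, hpc, hpc, hpc, hfact, hfact, hfact, hfact]
  have h1 := hφ₁₂ y₁ y₂; have h2 := hφ₁₂ w₁ w₂
  have h3 := hφ₁₂ y₁ w₂; have h4 := hφ₁₂ w₁ y₂
  have g1 := hφ₁ y₁ a; have g2 := hφ₁ w₁ a
  have k1 := hφ₂ y₂ a; have k2 := hφ₂ w₂ a
  field_simp
end

section
/- Conversely, if a strictly positive joint pmf p(y¹, y², a) on finite sets has the property that for all a, y¹, ỹ¹, y², ỹ² the odds ratio [p(y¹,y²|a) p(ỹ¹,ỹ²|a)] / [p(y¹,ỹ²|a) p(ỹ¹,y²|a)] does not depend on a, then there exist strictly positive functions φ₁₂(y¹,y²), φ₁(y¹,a), φ₂(y²,a) and Z(a) > 0 such that p(y¹, y², a) = φ₁₂(y¹,y²) φ₁(y¹,a) φ₂(y²,a) p(a) / Z(a). -/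
/-- Conversely, if a strictly positive joint pmf `p(y¹,y²,a)` on finite
sets has conditional odds ratios that do not depend on `a`, then there exist strictly
positive potentials `φ₁₂, φ₁, φ₂` and `Z(a) > 0` such that
`p(y¹,y²,a) = φ₁₂(y¹,y²) φ₁(y¹,a) φ₂(y²,a) p_A(a) / Z(a)`, where
`p_A(a) = Σ_{y¹,y²} p(y¹,y²,a)` and `Z(a)` is the partition function. -/
theorem odds_ratio_invariant_implies_chain_graph_factorization
    {𝓨₁ 𝓨₂ 𝓐 : Type*} [Fintype 𝓨₁] [Fintype 𝓨₂] [Fintype 𝓐]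
    (p : 𝓨₁ → 𝓨₂ → 𝓐 → ℝ) (hp : ∀ y₁ y₂ a, 0 < p y₁ y₂ a)
    (hpmf : ∑ y₁ : 𝓨₁, ∑ y₂ : 𝓨₂, ∑ a : 𝓐, p y₁ y₂ a = 1)
    (pc : 𝓨₁ → 𝓨₂ → 𝓐 → ℝ)
    (hpc : ∀ y₁ y₂ a, pc y₁ y₂ a = p y₁ y₂ a / ∑ u : 𝓨₁, ∑ v : 𝓨₂, p u v a)
    (hor : ∀ (a₀ a₁ : 𝓐) (y₁ w₁ : 𝓨₁) (y₂ w₂ : 𝓨₂),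
      pc y₁ y₂ a₀ * pc w₁ w₂ a₀ / (pc y₁ w₂ a₀ * pc w₁ y₂ a₀) =
      pc y₁ y₂ a₁ * pc w₁ w₂ a₁ / (pc y₁ w₂ a₁ * pc w₁ y₂ a₁)) :
    ∃ (φ₁₂ : 𝓨₁ → 𝓨₂ → ℝ) (φ₁ : 𝓨₁ → 𝓐 → ℝ) (φ₂ : 𝓨₂ → 𝓐 → ℝ) (Z : 𝓐 → ℝ),
      (∀ y₁ y₂, 0 < φ₁₂ y₁ y₂) ∧ (∀ y₁ a, 0 < φ₁ y₁ a) ∧ (∀ y₂ a, 0 < φ₂ y₂ a) ∧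
      (∀ a, Z a = ∑ y₁ : 𝓨₁, ∑ y₂ : 𝓨₂, φ₁₂ y₁ y₂ * φ₁ y₁ a * φ₂ y₂ a) ∧
      (∀ a, 0 < Z a) ∧
      (∀ y₁ y₂ a, p y₁ y₂ a =
        φ₁₂ y₁ y₂ * φ₁ y₁ a * φ₂ y₂ a * (∑ u : 𝓨₁, ∑ v : 𝓨₂, p u v a) / Z a) := by
  -- nonemptiness
  have hne1 : Nonempty 𝓨₁ := by
    by_contra h; rw [not_nonempty_iff] at h
    haveI := h; simp at hpmf
  have hne2 : Nonempty 𝓨₂ := by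
    by_contra h; rw [not_nonempty_iff] at h
    haveI := h; simp at hpmf
  have hne3 : Nonempty 𝓐 := by
    by_contra h; rw [not_nonempty_iff] at h
    haveI := h; simp at hpmf
  haveI := hne1; haveI := hne2; haveI := hne3
  obtain ⟨y₀₁⟩ := hne1; obtain ⟨y₀₂⟩ := hne2; obtain ⟨a₀⟩ := hne3
  set S : 𝓐 → ℝ := fun a => ∑ u : 𝓨₁, ∑ v : 𝓨₂, p u v a with hS
  have hSpos : ∀ a, 0 < S a := by
    intro a
    apply Finset.sum_pos (fun u _ => Finset.sum_pos (fun v _ => hp u v a) Finset.univ_nonempty)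
      Finset.univ_nonempty
  have hpcpos : ∀ y₁ y₂ a, 0 < pc y₁ y₂ a := by
    intro y₁ y₂ a
    rw [hpc]
    exact div_pos (hp y₁ y₂ a) (hSpos a)
  -- sum of pc is 1
  have hpcsum : ∀ a, ∑ u : 𝓨₁, ∑ v : 𝓨₂, pc u v a = 1 := by
    intro a
    have : ∑ u : 𝓨₁, ∑ v : 𝓨₂, pc u v a = (∑ u : 𝓨₁, ∑ v : 𝓨₂, p u v a) / S a := by
      rw [Finset.sum_div]
      refine Finset.sum_congr rfl fun u _ => ?_
      rw [Finset.sum_div]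
      exact Finset.sum_congr rfl fun v _ => hpc u v a
    rw [this]
    exact div_self (hSpos a).ne'
  refine ⟨fun y₁ y₂ => pc y₁ y₂ a₀ * pc y₀₁ y₀₂ a₀ / (pc y₁ y₀₂ a₀ * pc y₀₁ y₂ a₀),
    fun y₁ a => pc y₁ y₀₂ a / pc y₀₁ y₀₂ a,
    fun y₂ a => pc y₀₁ y₂ a,
    fun a => ∑ y₁ : 𝓨₁, ∑ y₂ : 𝓨₂,
      (pc y₁ y₂ a₀ * pc y₀₁ y₀₂ a₀ / (pc y₁ y₀₂ a₀ * pc y₀₁ y₂ a₀)) *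
      (pc y₁ y₀₂ a / pc y₀₁ y₀₂ a) * pc y₀₁ y₂ a, ?_, ?_, ?_, fun a => rfl, ?_, ?_⟩
  · intro y₁ y₂
    exact div_pos (mul_pos (hpcpos _ _ _) (hpcpos _ _ _))
      (mul_pos (hpcpos _ _ _) (hpcpos _ _ _))
  · intro y₁ a
    exact div_pos (hpcpos _ _ _) (hpcpos _ _ _)
  · intro y₂ a
    exact hpcpos _ _ _
  all_goals
    have key : ∀ (y₁ : 𝓨₁) (y₂ : 𝓨₂) (a : 𝓐),
        (pc y₁ y₂ a₀ * pc y₀₁ y₀₂ a₀ / (pc y₁ y₀₂ a₀ * pc y₀₁ y₂ a₀)) *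
        (pc y₁ y₀₂ a / pc y₀₁ y₀₂ a) * pc y₀₁ y₂ a = pc y₁ y₂ a := by
      intro y₁ y₂ a
      rw [hor a₀ a y₁ y₀₁ y₂ y₀₂]
      have h1 := (hpcpos y₁ y₂ a).ne'
      have h2 := (hpcpos y₀₁ y₀₂ a).ne'
      have h3 := (hpcpos y₁ y₀₂ a).ne'
      have h4 := (hpcpos y₀₁ y₂ a).ne'
      field_simp
  · intro a
    dsimp only
    have : (∑ y₁ : 𝓨₁, ∑ y₂ : 𝓨₂,
        (pc y₁ y₂ a₀ * pc y₀₁ y₀₂ a₀ / (pc y₁ y₀₂ a₀ * pc y₀₁ y₂ a₀)) *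
        (pc y₁ y₀₂ a / pc y₀₁ y₀₂ a) * pc y₀₁ y₂ a) = 1 := by
      rw [← hpcsum a]
      exact Finset.sum_congr rfl fun u _ => Finset.sum_congr rfl fun v _ => key u v a
    rw [this]
    norm_num
  · intro y₁ y₂ a
    dsimp only
    have hZ : (∑ u : 𝓨₁, ∑ v : 𝓨₂,
        (pc u v a₀ * pc y₀₁ y₀₂ a₀ / (pc u y₀₂ a₀ * pc y₀₁ v a₀)) *
        (pc u y₀₂ a / pc y₀₁ y₀₂ a) * pc y₀₁ v a) = 1 := by
      rw [← hpcsum a]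
      exact Finset.sum_congr rfl fun u _ => Finset.sum_congr rfl fun v _ => key u v a
    rw [hZ, key y₁ y₂ a, hpc y₁ y₂ a]
    rw [div_one, div_mul_cancel₀ _ (hSpos a).ne']
end

section
/- Double robustness of the estimating function U₁: suppose the true conditional law of (Y¹, Y²) given A satisfies the odds-ratio parameterization p(y¹, y² | a) = f(y¹ | a, Y²=0) γ(y¹, y²) f(y² | a, Y¹=0) / β₁(a), with γ correctly specified, and the working model f(y¹ | a', Y²=0; ω₁) equals the truth. Then for any bounded function h, E[ U₁ ] = 0 at β_h(a', a'') = Σ_{y¹,y²} h(y¹,y²) f(y¹ | a', Y²=0) γ(y¹,y²) f(y² | a'', Y¹=0), where U₁ = I(A = a'') / γ(Y¹, Y²) · [ Σ_{y¹} h(y¹, Y²) f(y¹ | a', Y²=0) γ(y¹, Y²) − β_h(a', a'') ]. -/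
/-- Double robustness (unbiasedness) of the estimating function `U₁`:
if the true conditional law of `(Y¹,Y²)` given `A` satisfies the odds-ratio
parameterization `p(y¹,y²|a) = f(y¹|a,Y²=0) γ(y¹,y²) f(y²|a,Y¹=0) / β₁(a)` with `γ`
correctly specified and the working model for `f(y¹|·,Y²=0)` equal to the truth, then
for any function `h`,
`E[U₁] = 0` at `β_h(a',a'') = Σ_{y¹,y²} h(y¹,y²) f(y¹|a',Y²=0) γ(y¹,y²) f(y²|a'',Y¹=0)`,
where
`U₁ = I(A=a'')/γ(Y¹,Y²) · [Σ_{y¹} h(y¹,Y²) f(y¹|a',Y²=0) γ(y¹,Y²) − β_h(a',a'')]`. -/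
theorem U1_unbiased
    {𝓨₁ 𝓨₂ : Type*} [Fintype 𝓨₁] [Fintype 𝓨₂] [Zero 𝓨₁] [Zero 𝓨₂]
    (f₁ : 𝓨₁ → Bool → ℝ) (f₂ : 𝓨₂ → Bool → ℝ) (γ : 𝓨₁ → 𝓨₂ → ℝ)
    (β₁ : Bool → ℝ) (pA : Bool → ℝ)
    (hf₁pos : ∀ y₁ a, 0 < f₁ y₁ a) (hf₂pos : ∀ y₂ a, 0 < f₂ y₂ a)
    (hγpos : ∀ y₁ y₂, 0 < γ y₁ y₂)
    (hγref₁ : ∀ y₁, γ y₁ 0 = 1) (hγref₂ : ∀ y₂, γ 0 y₂ = 1)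
    (hf₁pmf : ∀ a, ∑ y₁ : 𝓨₁, f₁ y₁ a = 1) (hf₂pmf : ∀ a, ∑ y₂ : 𝓨₂, f₂ y₂ a = 1)
    (hβ₁ : ∀ a, β₁ a = ∑ y₁ : 𝓨₁, ∑ y₂ : 𝓨₂, f₁ y₁ a * γ y₁ y₂ * f₂ y₂ a)
    (hpApos : ∀ a, 0 ≤ pA a) (hpAsum : pA true + pA false = 1)
    -- the observed-data joint law of (Y¹, Y², A)
    (P : 𝓨₁ → 𝓨₂ → Bool → ℝ)
    (hP : ∀ y₁ y₂ a, P y₁ y₂ a = pA a * (f₁ y₁ a * γ y₁ y₂ * f₂ y₂ a / β₁ a))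
    (h : 𝓨₁ → 𝓨₂ → ℝ) (a' a'' : Bool)
    (βh : ℝ)
    (hβh : βh = ∑ y₁ : 𝓨₁, ∑ y₂ : 𝓨₂, h y₁ y₂ * f₁ y₁ a' * γ y₁ y₂ * f₂ y₂ a'') :
    ∑ y₁ : 𝓨₁, ∑ y₂ : 𝓨₂, ∑ a : Bool,
      P y₁ y₂ a *
        ((if a = a'' then (1 : ℝ) else 0) / γ y₁ y₂ *
          ((∑ u : 𝓨₁, h u y₂ * f₁ u a' * γ u y₂) - βh)) = 0 := by
  have h1 : ∀ y₁ y₂, (∑ a : Bool,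
      P y₁ y₂ a * ((if a = a'' then (1 : ℝ) else 0) / γ y₁ y₂ *
        ((∑ u : 𝓨₁, h u y₂ * f₁ u a' * γ u y₂) - βh))) =
      pA a'' / β₁ a'' * (f₁ y₁ a'' *
        (f₂ y₂ a'' * ((∑ u : 𝓨₁, h u y₂ * f₁ u a' * γ u y₂) - βh))) := by
    intro y₁ y₂
    have hstep : (∑ a : Bool,
        P y₁ y₂ a * ((if a = a'' then (1 : ℝ) else 0) / γ y₁ y₂ *
          ((∑ u : 𝓨₁, h u y₂ * f₁ u a' * γ u y₂) - βh))) =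
        P y₁ y₂ a'' * (1 / γ y₁ y₂ *
          ((∑ u : 𝓨₁, h u y₂ * f₁ u a' * γ u y₂) - βh)) := by
      rw [Fintype.sum_bool]; cases a'' <;> simp
    rw [hstep, hP]
    have key : γ y₁ y₂ * (γ y₁ y₂)⁻¹ = 1 := mul_inv_cancel₀ (hγpos y₁ y₂).ne'
    linear_combination (pA a'' * f₁ y₁ a'' * f₂ y₂ a'' / β₁ a'' *
      ((∑ u : 𝓨₁, h u y₂ * f₁ u a' * γ u y₂) - βh)) * key
  simp only [h1]
  rw [← Finset.sum_comm]
  have h2 : ∀ y₂ : 𝓨₂, (∑ y₁ : 𝓨₁,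
      pA a'' / β₁ a'' * (f₁ y₁ a'' *
        (f₂ y₂ a'' * ((∑ u : 𝓨₁, h u y₂ * f₁ u a' * γ u y₂) - βh)))) =
      pA a'' / β₁ a'' * (f₂ y₂ a'' * ((∑ u : 𝓨₁, h u y₂ * f₁ u a' * γ u y₂) - βh)) := by
    intro y₂
    rw [← Finset.mul_sum, ← Finset.sum_mul, hf₁pmf, one_mul]
  simp only [h2]
  rw [← Finset.mul_sum]
  have h3 : (∑ y₂ : 𝓨₂, f₂ y₂ a'' * ((∑ u : 𝓨₁, h u y₂ * f₁ u a' * γ u y₂) - βh)) = 0 := by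
    simp only [mul_sub, Finset.sum_sub_distrib, ← Finset.sum_mul, hf₂pmf, one_mul]
    rw [sub_eq_zero, hβh, Finset.sum_comm]
    congr 1; ext y₂
    rw [Finset.mul_sum]
    congr 1; ext u; ring
  rw [h3, mul_zero]
end
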